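/- Let X₁ = ∂_{x₁} − x₂^{2k+1}∂_{x₃}, X₂ = ∂_{x₂} + x₁^{2k+1}∂_{x₃} on ℝ³, k ≥ 1. On the submanifold Σ₁ = {(x, x₂^{2k+1}p₃, −x₁^{2k+1}p₃, p₃) : (x₁, x₂) ≠ (0,0), p₃ > 0} of the characteristic set, the restriction of the canonical symplectic form σ = Σ dpₖ ∧ dxₖ is nondegenerate; i.e., Σ₁ is a symplectic submanifold of ℝ³ × ℝ³. -/

import Mathlib

/-- The canonical symplectic form on ℝ³ × ℝ³ ≅ T*ℝ³. -/
def sympForm (v w : (Fin 3 → ℝ) × (Fin 3 → ℝ)) : ℝ :=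
  (∑ k, v.2 k * w.1 k) - (∑ k, w.2 k * v.1 k)

/-- Parametrization of the piece `Σ₁` of the characteristic set of
`X₁ = ∂₁ − x₂^{2k+1}∂₃`, `X₂ = ∂₂ + x₁^{2k+1}∂₃`:
`Φ(x, t) = (x, (x₂^{2k+1}t, −x₁^{2k+1}t, t))`. -/
def sigmaChart (k : ℕ) (q : (Fin 3 → ℝ) × ℝ) : (Fin 3 → ℝ) × (Fin 3 → ℝ) :=
  (q.1, ![(q.1 1) ^ (2 * k + 1) * q.2, -(q.1 0) ^ (2 * k + 1) * q.2, q.2])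

namespace Stmt16Aux

noncomputable def pii (i : Fin 3) : ((Fin 3 → ℝ) × ℝ) →L[ℝ] ℝ :=
  (ContinuousLinearMap.proj i).comp (ContinuousLinearMap.fst ℝ (Fin 3 → ℝ) ℝ)

noncomputable def tau : ((Fin 3 → ℝ) × ℝ) →L[ℝ] ℝ :=
  ContinuousLinearMap.snd ℝ (Fin 3 → ℝ) ℝ

@[simp] lemma pii_apply (i : Fin 3) (z : (Fin 3 → ℝ) × ℝ) : pii i z = z.1 i := rfl
@[simp] lemma tau_apply (z : (Fin 3 → ℝ) × ℝ) : tau z = z.2 := rfl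

noncomputable def c0 (k : ℕ) (q : (Fin 3 → ℝ) × ℝ) : ((Fin 3 → ℝ) × ℝ) →L[ℝ] ℝ :=
  (q.1 1) ^ (2 * k + 1) • tau +
    q.2 • ((((2 * k + 1 : ℕ) : ℝ) * (q.1 1) ^ (2 * k + 1 - 1)) • pii 1)

noncomputable def c1 (k : ℕ) (q : (Fin 3 → ℝ) × ℝ) : ((Fin 3 → ℝ) × ℝ) →L[ℝ] ℝ :=
  (-(q.1 0) ^ (2 * k + 1)) • tau +
    q.2 • (-((((2 * k + 1 : ℕ) : ℝ) * (q.1 0) ^ (2 * k + 1 - 1)) • pii 0))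

noncomputable def Dmap (k : ℕ) (q : (Fin 3 → ℝ) × ℝ) :
    ((Fin 3 → ℝ) × ℝ) →L[ℝ] ((Fin 3 → ℝ) × (Fin 3 → ℝ)) :=
  (ContinuousLinearMap.fst ℝ (Fin 3 → ℝ) ℝ).prod
    (ContinuousLinearMap.pi ![c0 k q, c1 k q, tau])

lemma hasFDeriv (k : ℕ) (q : (Fin 3 → ℝ) × ℝ) :
    HasFDerivAt (sigmaChart k) (Dmap k q) q := by
  have h1 : ∀ i : Fin 3, HasFDerivAt (fun q' : (Fin 3 → ℝ) × ℝ => q'.1 i) (pii i) q :=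
    fun i => (pii i).hasFDerivAt
  have hsnd : HasFDerivAt (fun q' : (Fin 3 → ℝ) × ℝ => q'.2) tau q := tau.hasFDerivAt
  refine HasFDerivAt.prodMk ?_ ?_
  · exact hasFDerivAt_fst
  · rw [hasFDerivAt_pi']
    intro i
    rw [show (ContinuousLinearMap.proj i).comp
        (ContinuousLinearMap.pi ![c0 k q, c1 k q, tau]) = ![c0 k q, c1 k q, tau] i from
      ContinuousLinearMap.proj_pi _ i]
    fin_cases i
    · have hpow : HasFDerivAt (fun q' : (Fin 3 → ℝ) × ℝ => (q'.1 1) ^ (2 * k + 1))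
          ((((2 * k + 1 : ℕ) : ℝ) * (q.1 1) ^ (2 * k + 1 - 1)) • pii 1) q :=
        by have h := HasDerivAt.comp_hasFDerivAt q (hasDerivAt_pow (2 * k + 1) (q.1 1)) (h1 1); exact h
      simpa [c0, Pi.mul_def] using hpow.mul hsnd
    · have hpow : HasFDerivAt (fun q' : (Fin 3 → ℝ) × ℝ => -(q'.1 0) ^ (2 * k + 1))
          (-((((2 * k + 1 : ℕ) : ℝ) * (q.1 0) ^ (2 * k + 1 - 1)) • pii 0)) q :=
        by have h := (HasDerivAt.comp_hasFDerivAt q (hasDerivAt_pow (2 * k + 1) (q.1 0)) (h1 0)).neg; exact h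
      show HasFDerivAt (fun x : (Fin 3 → ℝ) × ℝ => -(x.1 0) ^ (2 * k + 1) * x.2) (c1 k q) q
      refine (hpow.mul hsnd).congr_fderiv (ContinuousLinearMap.ext fun z => ?_)
      simp [c1]
    · simpa using hsnd

lemma sigma_fderiv_eq (k : ℕ) (q : (Fin 3 → ℝ) × ℝ) :
    fderiv ℝ (sigmaChart k) q = Dmap k q := (hasFDeriv k q).fderiv

@[simp] lemma Dmap_apply (k : ℕ) (q z : (Fin 3 → ℝ) × ℝ) :
    Dmap k q z = (z.1, fun i => ![c0 k q, c1 k q, tau] i z) := rfl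

end Stmt16Aux

open Stmt16Aux in
/-- the piece `Σ₁` of the characteristic set (where
`(x₁,x₂) ≠ (0,0)` and `p₃ > 0`) is a smooth 4-dimensional submanifold
(image of the smooth immersion `sigmaChart k`) on which the canonical
symplectic form is nondegenerate, i.e. `Σ₁` is symplectic. -/
theorem stmt_16 (k : ℕ) (hk : 1 ≤ k) :
    ContDiff ℝ (⊤ : ℕ∞) (sigmaChart k) ∧ Function.Injective (sigmaChart k) ∧
    ∀ q : (Fin 3 → ℝ) × ℝ, (q.1 0, q.1 1) ≠ (0, 0) → 0 < q.2 →
      Function.Injective (fderiv ℝ (sigmaChart k) q) ∧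
      ∀ v ∈ Set.range (fderiv ℝ (sigmaChart k) q),
        (∀ w ∈ Set.range (fderiv ℝ (sigmaChart k) q), sympForm v w = 0) →
        v = 0 := by
  refine ⟨?_, ?_, ?_⟩
  · -- smoothness
    refine ContDiff.prodMk contDiff_fst ?_
    rw [contDiff_pi]
    intro i
    fin_cases i <;> simp <;> fun_prop
  · -- injectivity of the chart
    intro a b hab
    have h1 := congrArg Prod.fst hab
    have h2 := congrArg (fun p => p.2 2) hab
    simp only [sigmaChart] at h1 h2
    simp only [Matrix.cons_val_two, Matrix.tail_cons, Matrix.head_cons] at h2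
    exact Prod.ext h1 h2
  · intro q hq hq2
    rw [sigma_fderiv_eq]
    constructor
    · intro a b hab
      have h1 := congrArg Prod.fst hab
      have h2 := congrArg (fun p => p.2 2) hab
      simp only [Dmap_apply, Matrix.cons_val_two, Matrix.tail_cons, Matrix.head_cons,
        tau_apply] at h1 h2
      exact Prod.ext h1 h2
    · rintro v ⟨z, rfl⟩ hσ
      set x₁ := q.1 0 with hx1
      set x₂ := q.1 1 with hx2
      -- positivity of A + B
      have hpos : 0 < ((2 * k + 1 : ℕ) : ℝ) * x₂ ^ (2 * k) * q.2 +
          ((2 * k + 1 : ℕ) : ℝ) * x₁ ^ (2 * k) * q.2 := by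
        have hne : x₁ ≠ 0 ∨ x₂ ≠ 0 := by
          by_contra h
          push_neg at h
          exact hq (by simp [h.1, h.2])
        have hx : 0 < x₁ ^ (2 * k) + x₂ ^ (2 * k) := by
          rcases hne with h | h
          · have h1 : 0 < x₁ ^ (2 * k) := Even.pow_pos (even_two_mul k) h
            have h2 : 0 ≤ x₂ ^ (2 * k) := Even.pow_nonneg (even_two_mul k) _
            linarith
          · have h1 : 0 < x₂ ^ (2 * k) := Even.pow_pos (even_two_mul k) h
            have h2 : 0 ≤ x₁ ^ (2 * k) := Even.pow_nonneg (even_two_mul k) _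
            linarith
        have hn : (0 : ℝ) < ((2 * k + 1 : ℕ) : ℝ) := by positivity
        nlinarith [mul_pos (mul_pos hn hq2) hx]
      -- specialize hσ to test vectors
      have key : ∀ w : (Fin 3 → ℝ) × ℝ, sympForm (Dmap k q z) (Dmap k q w) = 0 :=
        fun w => hσ _ ⟨w, rfl⟩
      have e2 := key ((Pi.single 2 1 : Fin 3 → ℝ), 0)
      have e0 := key ((Pi.single 0 1 : Fin 3 → ℝ), 0)
      have e1 := key ((Pi.single 1 1 : Fin 3 → ℝ), 0)
      have et := key (0, 1)
      simp only [sympForm, Dmap_apply, Fin.sum_univ_three, Matrix.cons_val_zero,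
        Matrix.cons_val_one, Matrix.head_cons, Matrix.cons_val_two, Matrix.tail_cons,
        c0, c1, ContinuousLinearMap.add_apply, ContinuousLinearMap.smul_apply,
        ContinuousLinearMap.neg_apply, pii_apply, tau_apply, smul_eq_mul,
        Pi.single_eq_same, Pi.single_eq_of_ne, Pi.zero_apply, Prod.fst_zero,
        Prod.snd_zero] at e0 e1 e2 et ⊢
      norm_num [Pi.single_apply] at e0 e1 e2 et
      push_cast at hpos e0 e1 e2 et
      have hz2 : z.2 = 0 := by linarith
      have h11 : z.1 1 = 0 := by
        have hC : ((2 * (k : ℝ) + 1) * x₂ ^ (2 * k) * q.2 +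
            (2 * (k : ℝ) + 1) * x₁ ^ (2 * k) * q.2) * z.1 1 = 0 := by
          rw [hz2] at e0
          linear_combination e0
        exact (mul_eq_zero.mp hC).resolve_left hpos.ne'
      have h10 : z.1 0 = 0 := by
        have hC : ((2 * (k : ℝ) + 1) * x₂ ^ (2 * k) * q.2 +
            (2 * (k : ℝ) + 1) * x₁ ^ (2 * k) * q.2) * z.1 0 = 0 := by
          rw [hz2] at e1
          linear_combination -e1
        exact (mul_eq_zero.mp hC).resolve_left hpos.ne'
      have h12 : z.1 2 = 0 := by
        rw [h10, h11] at et
        linarith [et]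
      have hz1 : z.1 = 0 := by
        funext i
        fin_cases i
        · exact h10
        · exact h11
        · exact h12
      have hz : z = 0 := Prod.ext hz1 hz2
      subst hz
      refine Prod.ext rfl ?_
      funext i
      fin_cases i <;> simp [c0, c1]
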